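/- arXiv:math/0607163 — 2 statements merged into one kernel-verified Lean document; each statement's English description precedes it below -/
import Mathlib

section
/- For integers n ≥ 0 and h ≥ 0, the number of Dyck paths from (0,0) to (2n,0) that stay between the lines y = 0 and y = h equals (1/(n+1))·binomial(2n,n) minus the sum over k ≥ 1 of (binomial(2n, n - k(h+2) - 1) - 2·binomial(2n, n - k(h+2)) + binomial(2n, n - k(h+2) + 1)). -/
open Finset

/-- The height of the lattice path with step sequence `s` (true = up-step (1,1),
false = down-step (1,-1)) after `i` steps. -/
def pathHt {m : ℕ} (s : Fin m → Bool) (i : ℕ) : ℤ :=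
  ∑ j ∈ Finset.univ.filter (fun j : Fin m => (j : ℕ) < i), (if s j then (1 : ℤ) else -1)

/-- Binomial coefficient `n` choose `j` for an integer lower index `j`,
equal to `0` when `j < 0` or `j > n`. -/
def intChoose (n : ℕ) (j : ℤ) : ℤ :=
  if 0 ≤ j then (n.choose j.toNat : ℤ) else 0

/-!
Reflection principle. `W t b := walkCount t b` counts the ±1-walks of length `t` with displacement
`b`; put `M = 2 (h + 2)`. The walks of length `t` from `0` to `a` that stay in `[0, h]` number
`∑ k : ℤ, (W t (a + k M) - W t (a + 2 + k M))`, the signed sum of `W` over the orbit of `a`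
under the reflections in the lines `y = -1` and `y = h + 1`: both sides satisfy Pascal's
recursion inside the strip, vanish on those two lines, and agree at `t = 0`.
For `t = 2n` and `a = 0` we have `W (2n) (2j) = C(2n, n + j)`. The term `k = 0` is the Catalan
number `C(2n, n) - C(2n, n + 1)`, and since `W t (-b) = W t b` the terms `k` and `-k` combine into
the second differences of the binomial coefficients.
-/

lemma HasSum.eq_add_tsum_nat_succ {α : Type*} [AddCommGroup α] [UniformSpace α]
    [IsUniformAddGroup α] [CompleteSpace α] [T2Space α] {f : ℤ → α} {s : α}
    (hf : HasSum f s) :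
    s = f 0 + ∑' k : ℕ, (f (k + 1) + f (-(k + 1))) := by
  have hsucc : Summable fun k : ℕ => f (k + 1) :=
    hf.summable.comp_injective fun a b hab => by simpa using hab
  have hneg : Summable fun k : ℕ => f (-(k + 1)) :=
    hf.summable.comp_injective fun a b hab => by simpa using hab
  rw [← hf.tsum_eq, tsum_of_add_one_of_neg_add_one hsucc hneg, hsucc.tsum_add hneg]
  abel

lemma intChoose_of_neg (N : ℕ) {j : ℤ} (hj : j < 0) : intChoose N j = 0 := by
  simp [intChoose, not_le.mpr hj]

lemma intChoose_natCast (N k : ℕ) : intChoose N k = N.choose k := by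
  simp [intChoose]

lemma intChoose_succ (N : ℕ) (j : ℤ) :
    intChoose (N + 1) j = intChoose N (j - 1) + intChoose N j := by
  rcases lt_trichotomy j 0 with hj | rfl | hj
  · simp [intChoose_of_neg, hj, show j - 1 < 0 by omega]
  · simp [intChoose]
  · obtain ⟨k, rfl⟩ : ∃ k : ℕ, j = k + 1 := ⟨(j - 1).toNat, by omega⟩
    rw [add_sub_cancel_right, ← Nat.cast_succ, intChoose_natCast, intChoose_natCast,
      intChoose_natCast, Nat.choose_succ_succ', Nat.cast_add]

lemma choose_two_mul_div_succ (n : ℕ) :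
    (((2 * n).choose n / (n + 1) : ℕ) : ℤ) = (2 * n).choose n - (2 * n).choose (n + 1) := by
  have h := Nat.choose_succ_right_eq (2 * n) n
  rw [show 2 * n - n = n by omega] at h
  have h' : ((2 * n).choose (n + 1) : ℤ) * (n + 1) = (2 * n).choose n * n := by exact_mod_cast h
  rw [Int.natCast_div, Int.ediv_eq_of_eq_mul_left (by positivity)]
  push_cast
  linear_combination h'

def walkCount : ℕ → ℤ → ℤ
  | 0, b => if b = 0 then 1 else 0
  | t + 1, b => walkCount t (b - 1) + walkCount t (b + 1)

lemma walkCount_neg (t : ℕ) (b : ℤ) : walkCount t (-b) = walkCount t b := by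
  induction t generalizing b with
  | zero => simp [walkCount]
  | succ t ih =>
    rw [walkCount, walkCount, show -b - 1 = -(b + 1) by ring, show -b + 1 = -(b - 1) by ring,
      ih, ih, add_comm]

lemma walkCount_eq_zero_of_lt_abs {t : ℕ} {b : ℤ} (hb : t < |b|) : walkCount t b = 0 := by
  induction t generalizing b with
  | zero => simp [walkCount, abs_pos.mp (by exact_mod_cast hb)]
  | succ t ih =>
    rw [walkCount, ih, ih, add_zero] <;> rw [lt_abs] at * <;> push_cast at hb <;> omega

lemma summable_walkCount (t : ℕ) : Summable (walkCount t) := by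
  refine summable_of_hasFiniteSupport ((Set.finite_Icc (-(t : ℤ)) t).subset fun b hb => ?_)
  by_contra hb'
  exact hb (walkCount_eq_zero_of_lt_abs (by rw [Set.mem_Icc, ← abs_le] at hb'; omega))

lemma walkCount_two_mul_sub (t : ℕ) (j : ℤ) : walkCount t (2 * j - t) = intChoose t j := by
  induction t generalizing j with
  | zero =>
    rcases lt_trichotomy j 0 with hj | rfl | hj
    · simp [walkCount, intChoose_of_neg _ hj]; omega
    · simp [walkCount, intChoose]
    · simp [walkCount, intChoose, hj.ne', hj.le, Nat.choose_eq_zero_of_lt (by omega : 0 < j.toNat)]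
  | succ t ih =>
    rw [walkCount, intChoose_succ, ← ih, ← ih]
    congr 2 <;> push_cast <;> ring

lemma summable_walkCount_add_mul (t : ℕ) (c : ℤ) {M : ℤ} (hM : M ≠ 0) :
    Summable fun k : ℤ => walkCount t (c + k * M) :=
  (summable_walkCount t).comp_injective fun k l hkl => by
    simpa [hM] using hkl

noncomputable def periodizedWalkCount (t : ℕ) (M c : ℤ) : ℤ :=
  ∑' k : ℤ, walkCount t (c + k * M)

section Periodized

variable {t : ℕ} {M : ℤ}

lemma periodizedWalkCount_succ (c : ℤ) (hM : M ≠ 0) :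
    periodizedWalkCount (t + 1) M c =
      periodizedWalkCount t M (c - 1) + periodizedWalkCount t M (c + 1) := by
  unfold periodizedWalkCount
  rw [← (summable_walkCount_add_mul t _ hM).tsum_add (summable_walkCount_add_mul t _ hM)]
  congr 1 with k
  rw [walkCount]
  ring_nf

lemma periodizedWalkCount_neg (c : ℤ) :
    periodizedWalkCount t M (-c) = periodizedWalkCount t M c := by
  unfold periodizedWalkCount
  rw [← (Equiv.neg ℤ).tsum_eq]
  congr 1 with k
  rw [← walkCount_neg, Equiv.neg_apply]
  ring_nf

lemma periodizedWalkCount_add_self (c : ℤ) :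
    periodizedWalkCount t M (c + M) = periodizedWalkCount t M c := by
  unfold periodizedWalkCount
  conv_rhs => rw [← (Equiv.addRight (1 : ℤ)).tsum_eq]
  congr 1 with k
  rw [Equiv.coe_addRight]
  ring_nf

lemma periodizedWalkCount_zero {c : ℤ} (hc : |c| < M) :
    periodizedWalkCount 0 M c = if c = 0 then 1 else 0 := by
  rw [periodizedWalkCount, tsum_eq_single 0 fun k hk => ?_]
  · simp [walkCount]
  · have hkM : M ≤ |k * M| := by
      rw [abs_mul, abs_of_pos (a := M) (by linarith [abs_nonneg c])]
      nlinarith [Int.one_le_abs hk, abs_nonneg c]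
    simp only [walkCount, ite_eq_right_iff, one_ne_zero, imp_false]
    intro h
    rw [show k * M = -c by linarith, abs_neg] at hkM
    omega

end Periodized

noncomputable def reflectedWalkCount (h t : ℕ) (a : ℤ) : ℤ :=
  periodizedWalkCount t (2 * (h + 2)) a - periodizedWalkCount t (2 * (h + 2)) (a + 2)

section Reflected

variable {h t : ℕ}

lemma reflectedWalkCount_neg_one : reflectedWalkCount h t (-1) = 0 := by
  rw [reflectedWalkCount, periodizedWalkCount_neg, sub_eq_zero]
  norm_num

lemma reflectedWalkCount_top : reflectedWalkCount h t (h + 1) = 0 := by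
  rw [reflectedWalkCount, sub_eq_zero, ← periodizedWalkCount_neg,
    ← periodizedWalkCount_add_self (-((h : ℤ) + 1))]
  ring_nf

lemma reflectedWalkCount_succ (a : ℤ) :
    reflectedWalkCount h (t + 1) a =
      reflectedWalkCount h t (a - 1) + reflectedWalkCount h t (a + 1) := by
  have hM : 2 * ((h : ℤ) + 2) ≠ 0 := by positivity
  simp only [reflectedWalkCount, periodizedWalkCount_succ _ hM]
  ring_nf

lemma reflectedWalkCount_zero {a : ℤ} (ha₀ : -1 ≤ a) (ha₁ : a ≤ h + 1) :
    reflectedWalkCount h 0 a = if a = 0 then 1 else 0 := by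
  rw [reflectedWalkCount, periodizedWalkCount_zero, periodizedWalkCount_zero,
    if_neg (show a + 2 ≠ 0 by omega), sub_zero] <;> rw [abs_lt] <;> constructor <;> omega

lemma hasSum_reflectedWalkCount (a : ℤ) :
    HasSum (fun k : ℤ =>
        walkCount t (a + k * (2 * (h + 2))) - walkCount t (a + 2 + k * (2 * (h + 2))))
      (reflectedWalkCount h t a) :=
  have hM : 2 * ((h : ℤ) + 2) ≠ 0 := by positivity
  (summable_walkCount_add_mul t _ hM).hasSum.sub (summable_walkCount_add_mul t _ hM).hasSum

end Reflected

def stripPaths (h t : ℕ) (b : ℤ) : Finset (Fin t → Bool) :=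
  univ.filter fun s => pathHt s t = b ∧ ∀ i ≤ t, 0 ≤ pathHt s i ∧ pathHt s i ≤ (h : ℤ)

lemma pathHt_zero {t : ℕ} (s : Fin t → Bool) : pathHt s 0 = 0 := by
  simp [pathHt]

lemma pathHt_snoc_of_le {t i : ℕ} (q : Fin t → Bool) (x : Bool) (hi : i ≤ t) :
    pathHt (Fin.snoc q x : Fin (t + 1) → Bool) i = pathHt q i := by
  simp only [pathHt, sum_filter, Fin.sum_univ_castSucc, Fin.snoc_castSucc, Fin.val_castSucc,
    Fin.val_last, Nat.not_lt.mpr hi, if_false, add_zero]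

lemma pathHt_snoc_succ {t : ℕ} (q : Fin t → Bool) (x : Bool) :
    pathHt (Fin.snoc q x : Fin (t + 1) → Bool) (t + 1) = pathHt q t + if x then 1 else -1 := by
  simp only [pathHt, sum_filter, Fin.sum_univ_castSucc, Fin.snoc_castSucc, Fin.val_castSucc,
    Fin.snoc_last, Fin.val_last, Nat.lt_succ_self, if_true]
  congr 1
  exact sum_congr rfl fun j _ => by simp [j.isLt, Nat.lt_succ_of_lt j.isLt]

lemma stripPaths_eq_empty {h t : ℕ} {b : ℤ} (hb : b < 0 ∨ h < b) : stripPaths h t b = ∅ :=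
  filter_false_of_mem fun s _ ⟨hend, hbound⟩ => by
    have := hbound t le_rfl
    omega

lemma card_stripPaths_zero (h : ℕ) (b : ℤ) : #(stripPaths h 0 b) = if b = 0 then 1 else 0 := by
  by_cases hb : b = 0 <;> simp [stripPaths, pathHt_zero, hb, eq_comm]

lemma snoc_mem_stripPaths_iff {h t : ℕ} {b : ℤ} (hb₀ : 0 ≤ b) (hb₁ : b ≤ h)
    (q : Fin t → Bool) (x : Bool) :
    Fin.snoc q x ∈ stripPaths h (t + 1) b ↔ q ∈ stripPaths h t (b - if x then 1 else -1) := by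
  simp only [stripPaths, mem_filter, mem_univ, true_and, pathHt_snoc_succ]
  constructor
  · rintro ⟨hend, hbound⟩
    refine ⟨by omega, fun i hi => ?_⟩
    simpa [pathHt_snoc_of_le q x hi] using hbound i (by omega)
  · rintro ⟨hend, hbound⟩
    refine ⟨by omega, fun i hi => ?_⟩
    rcases Nat.lt_or_eq_of_le hi with hi | rfl
    · rw [pathHt_snoc_of_le q x (by omega)]
      exact hbound i (by omega)
    · rw [pathHt_snoc_succ]
      omega

lemma card_stripPaths_succ {h t : ℕ} {b : ℤ} (hb₀ : 0 ≤ b) (hb₁ : b ≤ h) :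
    #(stripPaths h (t + 1) b) = #(stripPaths h t (b - 1)) + #(stripPaths h t (b + 1)) := by
  have hcard {n : ℕ} (T : Finset (Fin n → Bool)) : #T = ∑ s, if s ∈ T then 1 else 0 := by
    simp
  rw [hcard, hcard, hcard, ← (Fin.snocEquiv fun _ => Bool).sum_comp, Fintype.sum_prod_type,
    Fintype.sum_bool]
  have hsnoc (x : Bool) (q : Fin t → Bool) :
      Fin.snocEquiv (fun _ => Bool) (x, q) = Fin.snoc q x := rfl
  simp only [hsnoc, snoc_mem_stripPaths_iff hb₀ hb₁, if_true, Bool.false_eq_true, if_false,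
    sub_neg_eq_add]

lemma card_stripPaths_eq_reflectedWalkCount (h t : ℕ) {b : ℤ} (hb₀ : -1 ≤ b)
    (hb₁ : b ≤ h + 1) :
    (#(stripPaths h t b) : ℤ) = reflectedWalkCount h t b := by
  induction t generalizing b with
  | zero => rw [card_stripPaths_zero, reflectedWalkCount_zero hb₀ hb₁]; split_ifs <;> rfl
  | succ t ih =>
    rcases eq_or_lt_of_le hb₀ with rfl | hb₀
    · rw [reflectedWalkCount_neg_one, stripPaths_eq_empty (by omega), card_empty, Nat.cast_zero]
    rcases eq_or_lt_of_le hb₁ with rfl | hb₁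
    · rw [reflectedWalkCount_top, stripPaths_eq_empty (by omega), card_empty, Nat.cast_zero]
    rw [card_stripPaths_succ (by omega) (by omega), reflectedWalkCount_succ, Nat.cast_add,
      ih (by omega) (by omega), ih (by omega) (by omega)]

lemma walkCount_two_mul (n : ℕ) (j : ℤ) :
    walkCount (2 * n) (2 * j) = intChoose (2 * n) (n + j) := by
  rw [← walkCount_two_mul_sub]
  push_cast
  ring_nf

lemma walkCount_zero_sub_walkCount_two (n : ℕ) :
    walkCount (2 * n) 0 - walkCount (2 * n) 2 = ((2 * n).choose n / (n + 1) : ℕ) := by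
  rw [choose_two_mul_div_succ, ← intChoose_natCast, ← intChoose_natCast]
  simpa using congrArg₂ (· - ·) (walkCount_two_mul n 0) (walkCount_two_mul n 1)

lemma walkCount_pair_eq_intChoose (n : ℕ) (j m : ℤ) :
    (walkCount (2 * n) (j * (2 * m)) - walkCount (2 * n) (2 + j * (2 * m)))
        + (walkCount (2 * n) (-j * (2 * m)) - walkCount (2 * n) (2 + -j * (2 * m)))
      = -(intChoose (2 * n) (n - j * m - 1) - 2 * intChoose (2 * n) (n - j * m)
          + intChoose (2 * n) (n - j * m + 1)) := by
  rw [← walkCount_neg _ (j * (2 * m)), ← walkCount_neg _ (2 + j * (2 * m)),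
    show -(2 + j * (2 * m)) = 2 * (-(j * m) - 1) by ring,
    show -(j * (2 * m)) = 2 * -(j * m) by ring, show -j * (2 * m) = 2 * -(j * m) by ring,
    show 2 + 2 * -(j * m) = 2 * (-(j * m) + 1) by ring,
    walkCount_two_mul, walkCount_two_mul, walkCount_two_mul]
  ring_nf

/-- The number of Dyck paths from `(0,0)` to `(2n,0)` staying between the lines
`y = 0` and `y = h`. -/
theorem bounded_dyck_paths_card (n h : ℕ) :
    ((Finset.univ.filter (fun s : Fin (2 * n) → Bool =>
        pathHt s (2 * n) = 0 ∧
        ∀ i ≤ 2 * n, 0 ≤ pathHt s i ∧ pathHt s i ≤ (h : ℤ))).card : ℤ)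
      = ((2 * n).choose n / (n + 1) : ℕ)
        - ∑' k : ℕ,
            (intChoose (2 * n) ((n : ℤ) - (k + 1) * (h + 2) - 1)
              - 2 * intChoose (2 * n) ((n : ℤ) - (k + 1) * (h + 2))
              + intChoose (2 * n) ((n : ℤ) - (k + 1) * (h + 2) + 1)) := by
  rw [show univ.filter _ = stripPaths h (2 * n) 0 from rfl,
    card_stripPaths_eq_reflectedWalkCount h (2 * n) (by norm_num) (by positivity),
    (hasSum_reflectedWalkCount 0).eq_add_tsum_nat_succ]
  simp only [zero_add, zero_mul, add_zero]
  rw [walkCount_zero_sub_walkCount_two,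
    tsum_congr fun k : ℕ => walkCount_pair_eq_intChoose n (k + 1) (h + 2), tsum_neg,
    ← sub_eq_add_neg]
end

section
/- For Re(s) > 1, ∫_0^1 u^{s-1}(θ(u)² - 1) du = -1/s + 1/(s-1) + ∫_1^∞ t^{-s}(θ(t)² - 1) dt, where θ(u) = Σ_{n∈Z} e^{-πn²u}; consequently π^{-s}Γ(s)·Σ_{(k,l)≠(0,0)}(k²+l²)^{-s} = -1/s + 1/(s-1) + ∫_1^∞ (t^{-s} + t^{s-1})(θ(t)² - 1) dt. -/
open Complex MeasureTheory

/-- Jacobi theta function `θ(u) = Σ_{n∈ℤ} e^{-πn²u}` for real `u`. -/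
noncomputable def theta (u : ℝ) : ℝ :=
  ∑' n : ℤ, Real.exp (-Real.pi * (n : ℝ) ^ 2 * u)

/-!
Put `f(t) = θ(t)² - 1`. The functional equation `θ(1/t)² = t θ(t)²` gives
`f(1/t) = t f(t) + t - 1`, so the substitution `u = 1/t` turns `∫₀¹ u^(s-1) f(u) du` into
`∫₁^∞ t^(-s) f(t) dt + ∫₁^∞ (t^(-s) - t^(-s-1)) dt`, and the last integral is `1/(s-1) - 1/s`.
Since `f(t) = Σ_{(k,l) ≠ 0} e^(-π(k²+l²)t)`, integrating termwise identifies the Mellin transform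
`∫₀^∞ t^(s-1) f(t) dt` with `π^(-s) Γ(s) Σ (k²+l²)^(-s)`; splitting it at `t = 1` gives the second
identity. On `t > 0`, `θ` is Mathlib's `HurwitzZeta.evenKernel 0`, which supplies the functional
equation, continuity and exponential decay of `θ - 1`.
-/

open Asymptotics Filter Set HurwitzZeta

section InvChangeOfVariables

variable {E : Type*} [NormedAddCommGroup E] [NormedSpace ℝ E]

lemma image_inv_Ioi_one : (fun t : ℝ ↦ t⁻¹) '' Ioi 1 = Ioo 0 1 := by
  rw [image_inv_eq_inv, inv_Ioi₀ one_pos, inv_one]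

lemma hasDerivWithinAt_inv_Ioi_one :
    ∀ t ∈ Ioi (1 : ℝ), HasDerivWithinAt (fun t : ℝ ↦ t⁻¹) (-(t ^ 2)⁻¹) (Ioi 1) t :=
  fun _ ht ↦ (hasDerivAt_inv (zero_lt_one.trans ht).ne').hasDerivWithinAt

lemma integrableOn_Ioo_zero_one_iff_comp_inv (g : ℝ → E) :
    IntegrableOn g (Ioo 0 1) ↔ IntegrableOn (fun t ↦ (t ^ 2)⁻¹ • g t⁻¹) (Ioi 1) := by
  simpa only [image_inv_Ioi_one, abs_neg, abs_inv, abs_sq] using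
    integrableOn_image_iff_integrableOn_abs_deriv_smul measurableSet_Ioi
      hasDerivWithinAt_inv_Ioi_one inv_injective.injOn g

lemma integral_Ioo_zero_one_eq_integral_comp_inv (g : ℝ → E) :
    ∫ u in Ioo 0 1, g u = ∫ t in Ioi 1, (t ^ 2)⁻¹ • g t⁻¹ := by
  simpa only [image_inv_Ioi_one, abs_neg, abs_inv, abs_sq] using
    integral_image_eq_integral_abs_deriv_smul measurableSet_Ioi
      hasDerivWithinAt_inv_Ioi_one inv_injective.injOn g

end InvChangeOfVariables

lemma integrableOn_Ioi_cpow_mul_of_isBigO_exp {g : ℝ → ℂ} {a T : ℝ} (ha : 0 < a)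
    (hT : 0 < T) (hg : ContinuousOn g (Ici T))
    (hdecay : g =O[atTop] fun t ↦ Real.exp (-a * t)) (c : ℂ) :
    IntegrableOn (fun t : ℝ ↦ (t : ℂ) ^ c * g t) (Ioi T) := by
  have hcont : ContinuousOn (fun t : ℝ ↦ (t : ℂ) ^ c * g t) (Ici T) :=
    .mul (fun t ht ↦ (continuousAt_ofReal_cpow_const t c
      (.inr (hT.trans_le ht).ne')).continuousWithinAt) hg
  have hcpow : (fun t : ℝ ↦ (t : ℂ) ^ c) =O[atTop] fun t ↦ t ^ c.re := by
    refine .of_norm_eventuallyLE ?_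
    filter_upwards [eventually_gt_atTop 0] with t ht
    rw [norm_cpow_eq_rpow_re_of_pos ht]
  have hhalf : (fun t : ℝ ↦ t ^ c.re * Real.exp (-a * t)) =O[atTop]
      fun t ↦ Real.exp (-(a / 2) * t) := by
    have hlim := tendsto_rpow_mul_exp_neg_mul_atTop_nhds_zero c.re (a / 2) (by positivity)
    refine ((hlim.isBigO_one ℝ).mul (isBigO_refl (fun t ↦ Real.exp (-(a / 2) * t)) _)).congr
      (fun t ↦ ?_) fun t ↦ one_mul _
    rw [mul_assoc, ← Real.exp_add]
    ring_nf
  exact ((hcont.locallyIntegrableOn measurableSet_Ici).integrableOn_of_isBigO_atTop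
      ((hcpow.mul hdecay).trans hhalf)
      ⟨Ioi T, Ioi_mem_atTop T, exp_neg_integrableOn_Ioi T (by positivity)⟩).mono_set
    Ioi_subset_Ici_self

lemma integrableOn_Ioi_one_cpow_neg_sub_cpow_neg_sub_one {s : ℂ} (hs : 1 < s.re) :
    IntegrableOn (fun t : ℝ ↦ (t : ℂ) ^ (-s) - (t : ℂ) ^ (-s - 1)) (Ioi 1) :=
  (integrableOn_Ioi_cpow_of_lt (by simp; linarith) one_pos).sub
    (integrableOn_Ioi_cpow_of_lt (by simp; linarith) one_pos)

lemma integral_Ioi_one_cpow_neg_sub_cpow_neg_sub_one {s : ℂ} (hs : 1 < s.re) :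
    ∫ t in Ioi (1 : ℝ), ((t : ℂ) ^ (-s) - (t : ℂ) ^ (-s - 1)) = -1 / s + 1 / (s - 1) := by
  have hre₁ : (-s).re < -1 := by simp; linarith
  have hre₂ : (-s - 1).re < -1 := by simp; linarith
  have hs0 : s ≠ 0 := by rintro rfl; simp at hs; linarith
  have hs1 : s - 1 ≠ 0 := sub_ne_zero.mpr (by rintro rfl; simp at hs)
  rw [integral_sub (integrableOn_Ioi_cpow_of_lt hre₁ one_pos)
      (integrableOn_Ioi_cpow_of_lt hre₂ one_pos),
    integral_Ioi_cpow_of_lt hre₁ one_pos, integral_Ioi_cpow_of_lt hre₂ one_pos]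
  simp only [ofReal_one, one_cpow, show -s - 1 + 1 = -s by ring, show -s + 1 = -(s - 1) by ring]
  field_simp
  ring

lemma int_sq_add_sq_eq_zero_iff (p : ℤ × ℤ) : p.1 ^ 2 + p.2 ^ 2 = 0 ↔ p = 0 := by
  rw [add_eq_zero_iff_of_nonneg (sq_nonneg _) (sq_nonneg _), pow_eq_zero_iff two_ne_zero,
    pow_eq_zero_iff two_ne_zero, Prod.ext_iff, Prod.fst_zero, Prod.snd_zero]

lemma norm_finTwoArrowEquiv_symm_sq_le (p : ℤ × ℤ) :
    ‖(finTwoArrowEquiv ℤ).symm p‖ ^ 2 ≤ ((p.1 ^ 2 + p.2 ^ 2 : ℤ) : ℝ) := by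
  rw [EisensteinSeries.norm_eq_max_natAbs]
  simp only [finTwoArrowEquiv_symm_apply, Matrix.cons_val_zero, Matrix.cons_val_one,
    Nat.cast_max, Nat.cast_natAbs, Int.cast_abs]
  push_cast
  rcases le_total |(p.1 : ℝ)| |(p.2 : ℝ)| with h | h
  · rw [max_eq_right h, sq_abs]; nlinarith [sq_nonneg (p.1 : ℝ)]
  · rw [max_eq_left h, sq_abs]; nlinarith [sq_nonneg (p.2 : ℝ)]

lemma summable_one_div_int_sq_add_sq_rpow {σ : ℝ} (hσ : 1 < σ) :
    Summable fun p : ℤ × ℤ ↦ 1 / ((p.1 ^ 2 + p.2 ^ 2 : ℤ) : ℝ) ^ σ := by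
  have hnorm := (finTwoArrowEquiv ℤ).symm.summable_iff.mpr
    (EisensteinSeries.summable_one_div_norm_rpow (k := 2 * σ) (by linarith))
  refine hnorm.of_nonneg_of_le (fun _ ↦ by positivity) fun p ↦ ?_
  rcases eq_or_ne p 0 with rfl | hp
  · simp [Real.zero_rpow (by linarith : σ ≠ 0), Real.rpow_nonneg]
  have hx : 0 < ‖(finTwoArrowEquiv ℤ).symm p‖ :=
    norm_pos_iff.mpr fun h ↦
      hp (by simpa [Prod.zero_eq_mk] using congrArg (finTwoArrowEquiv ℤ) h)
  calc 1 / ((p.1 ^ 2 + p.2 ^ 2 : ℤ) : ℝ) ^ σ = ((p.1 ^ 2 + p.2 ^ 2 : ℤ) : ℝ) ^ (-σ) := by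
        rw [Real.rpow_neg (by positivity), one_div]
    _ ≤ (‖(finTwoArrowEquiv ℤ).symm p‖ ^ 2) ^ (-σ) :=
        Real.rpow_le_rpow_of_nonpos (by positivity) (norm_finTwoArrowEquiv_symm_sq_le p)
          (by linarith)
    _ = ‖(finTwoArrowEquiv ℤ).symm p‖ ^ (-(2 * σ)) := by
        rw [← Real.rpow_natCast, ← Real.rpow_mul (norm_nonneg _)]
        ring_nf

lemma hasSum_theta {t : ℝ} (ht : 0 < t) :
    HasSum (fun n : ℤ ↦ Real.exp (-Real.pi * (n : ℝ) ^ 2 * t)) (theta t) := by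
  have h := (hasSum_int_evenKernel 0 ht).summable
  simp only [add_zero] at h
  exact h.hasSum

lemma theta_eq_evenKernel {t : ℝ} (ht : 0 < t) : theta t = evenKernel 0 t :=
  (hasSum_theta ht).unique (by simpa using hasSum_int_evenKernel 0 ht)

lemma theta_inv_sq {t : ℝ} (ht : 0 < t) : theta t⁻¹ ^ 2 = t * theta t ^ 2 := by
  have h := evenKernel_functional_equation 0 t
  rw [← evenKernel_eq_cosKernel_of_zero, ← theta_eq_evenKernel ht, one_div t,
    ← theta_eq_evenKernel (inv_pos.mpr ht)] at h
  rw [h, mul_pow, div_pow, one_pow, ← Real.rpow_natCast (t ^ (1 / 2 : ℝ)) 2,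
    ← Real.rpow_mul ht.le]
  norm_num
  field_simp

lemma continuousOn_theta : ContinuousOn theta (Ioi 0) :=
  (continuousOn_evenKernel 0).congr fun _ ht ↦ theta_eq_evenKernel ht

lemma isBigO_atTop_theta_sq_sub_one : ∃ p : ℝ, 0 < p ∧
    (fun t : ℝ ↦ (theta t : ℂ) ^ 2 - 1) =O[atTop] fun t ↦ Real.exp (-p * t) := by
  obtain ⟨p, hp, hO⟩ := isBigO_atTop_evenKernel_sub 0
  rw [if_pos rfl] at hO
  have hsub : (fun t ↦ theta t - 1) =O[atTop] fun t ↦ Real.exp (-p * t) := by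
    refine EventuallyEq.trans_isBigO ?_ hO
    filter_upwards [eventually_gt_atTop 0] with t ht
    rw [theta_eq_evenKernel ht]
  have hexp : (fun t : ℝ ↦ Real.exp (-p * t)) =O[atTop] fun _ ↦ (1 : ℝ) :=
    (Real.tendsto_exp_atBot.comp
      (tendsto_id.const_mul_atTop_of_neg (neg_neg_iff_pos.2 hp))).isBigO_one ℝ
  have hadd : (fun t ↦ theta t + 1) =O[atTop] fun _ ↦ (1 : ℝ) :=
    ((hsub.trans hexp).add (isBigO_const_one ℝ (2 : ℝ) atTop)).congr_left
      fun t ↦ by ring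
  have hsq : (fun t ↦ theta t ^ 2 - 1) =O[atTop] fun t ↦ Real.exp (-p * t) :=
    (hsub.mul hadd).congr (fun t ↦ by ring) fun t ↦ mul_one _
  exact ⟨p, hp, (isBigO_ofReal_left.mpr hsq).congr_left fun t ↦ by push_cast; rfl⟩

lemma integrableOn_Ioi_one_cpow_mul_theta_sq_sub_one (c : ℂ) :
    IntegrableOn (fun t : ℝ ↦ (t : ℂ) ^ c * ((theta t : ℂ) ^ 2 - 1)) (Ioi 1) := by
  obtain ⟨p, hp, hO⟩ := isBigO_atTop_theta_sq_sub_one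
  have hθ : ContinuousOn theta (Ici 1) :=
    continuousOn_theta.mono fun _ ht ↦ zero_lt_one.trans_le (mem_Ici.mp ht)
  exact integrableOn_Ioi_cpow_mul_of_isBigO_exp hp one_pos (by fun_prop) hO c

lemma hasSum_theta_sq_sub_one {t : ℝ} (ht : 0 < t) :
    HasSum (fun p : ℤ × ℤ ↦ if ((p.1 ^ 2 + p.2 ^ 2 : ℤ) : ℝ) = 0 then 0 else
      (1 : ℂ) * Real.exp (-Real.pi * ((p.1 ^ 2 + p.2 ^ 2 : ℤ) : ℝ) * t))
      ((theta t : ℂ) ^ 2 - 1) := by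
  have hθ := hasSum_theta ht
  have hprod : HasSum (fun p : ℤ × ℤ ↦ Real.exp (-Real.pi * ((p.1 ^ 2 + p.2 ^ 2 : ℤ) : ℝ) * t))
      (theta t ^ 2) := by
    have hsum := hθ.summable.mul_of_nonneg hθ.summable (fun _ ↦ (Real.exp_pos _).le)
      (fun _ ↦ (Real.exp_pos _).le)
    refine (sq (theta t) ▸ hθ.mul hθ hsum).congr_fun fun p ↦ ?_
    rw [← Real.exp_add]
    push_cast
    ring_nf
  have hsub := hasSum_ite_sub_hasSum hprod 0
  rw [Prod.fst_zero, Prod.snd_zero, zero_pow two_ne_zero, add_zero, Int.cast_zero, mul_zero,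
    zero_mul, Real.exp_zero] at hsub
  convert hasSum_ofReal.mpr hsub using 1
  · ext p
    simp only [Int.cast_eq_zero, int_sq_add_sq_eq_zero_iff, one_mul]
    split_ifs <;> simp
  · push_cast
    rfl

lemma pi_cpow_mul_Gamma_mul_epstein_eq_mellin {s : ℂ} (hs : 1 < s.re) :
    (Real.pi : ℂ) ^ (-s) * Gamma s *
        (∑' p : ℤ × ℤ, if p ≠ 0 then ((p.1 ^ 2 + p.2 ^ 2 : ℤ) : ℂ) ^ (-s) else 0)
      = mellin (fun t ↦ (theta t : ℂ) ^ 2 - 1) s := by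
  have hs0 : s ≠ 0 := by rintro rfl; simp at hs; linarith
  have hmellin := hasSum_mellin_pi_mul₀ (a := fun _ ↦ 1) (fun _ ↦ by positivity) (by linarith)
    (fun t ht ↦ hasSum_theta_sq_sub_one ht)
    (by simpa using summable_one_div_int_sq_add_sq_rpow hs)
  rw [← hmellin.tsum_eq, ← tsum_mul_left]
  refine tsum_congr fun p ↦ ?_
  split_ifs with hp
  · rw [mul_one, ofReal_intCast, div_eq_mul_inv, ← cpow_neg]
  · rw [not_not.mp hp]
    simp [zero_cpow hs0]

lemma inv_sq_smul_cpow_mul_theta_sq_sub_one_inv (s : ℂ) {t : ℝ} (ht : 0 < t) :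
    (t ^ 2)⁻¹ • (((t⁻¹ : ℝ) : ℂ) ^ (s - 1) * ((theta t⁻¹ : ℂ) ^ 2 - 1)) =
      (t : ℂ) ^ (-s) * ((theta t : ℂ) ^ 2 - 1) + ((t : ℂ) ^ (-s) - (t : ℂ) ^ (-s - 1)) := by
  have hT : (t : ℂ) ≠ 0 := ofReal_ne_zero.mpr ht.ne'
  have hθ : ((theta t⁻¹ : ℝ) : ℂ) ^ 2 = t * (theta t : ℂ) ^ 2 := by
    exact_mod_cast congrArg ofReal (theta_inv_sq ht)
  have harg : arg t ≠ Real.pi := by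
    rw [arg_ofReal_of_nonneg ht.le]
    exact Real.pi_ne_zero.symm
  rw [real_smul, ofReal_inv, ofReal_inv, ofReal_pow, hθ, inv_cpow _ _ harg, cpow_sub _ _ hT,
    cpow_one, cpow_neg, show -s - 1 = -(s + 1) by ring, cpow_neg, cpow_add _ _ hT, cpow_one]
  have : (t : ℂ) ^ s ≠ 0 := cpow_ne_zero_iff.mpr (.inl hT)
  field_simp
  ring

lemma integrableOn_Ioo_zero_one_cpow_mul_theta_sq_sub_one {s : ℂ} (hs : 1 < s.re) :
    IntegrableOn (fun u : ℝ ↦ (u : ℂ) ^ (s - 1) * ((theta u : ℂ) ^ 2 - 1)) (Ioo 0 1) := by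
  rw [integrableOn_Ioo_zero_one_iff_comp_inv]
  exact ((integrableOn_Ioi_one_cpow_mul_theta_sq_sub_one (-s)).add
    (integrableOn_Ioi_one_cpow_neg_sub_cpow_neg_sub_one hs)).congr_fun
    (fun t ht ↦ (inv_sq_smul_cpow_mul_theta_sq_sub_one_inv s (zero_lt_one.trans ht)).symm)
    measurableSet_Ioi

lemma integral_Ioo_zero_one_cpow_mul_theta_sq_sub_one {s : ℂ} (hs : 1 < s.re) :
    ∫ u in Ioo (0 : ℝ) 1, (u : ℂ) ^ (s - 1) * ((theta u : ℂ) ^ 2 - 1)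
      = -1 / s + 1 / (s - 1) + ∫ t in Ioi (1 : ℝ), (t : ℂ) ^ (-s) * ((theta t : ℂ) ^ 2 - 1) := by
  rw [integral_Ioo_zero_one_eq_integral_comp_inv, setIntegral_congr_fun measurableSet_Ioi
    (fun t ht ↦ inv_sq_smul_cpow_mul_theta_sq_sub_one_inv s (zero_lt_one.trans ht)),
    integral_add (integrableOn_Ioi_one_cpow_mul_theta_sq_sub_one (-s))
      (integrableOn_Ioi_one_cpow_neg_sub_cpow_neg_sub_one hs),
    integral_Ioi_one_cpow_neg_sub_cpow_neg_sub_one hs, add_comm]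

theorem epstein_functional_pieces (s : ℂ) (hs : 1 < s.re) :
    (∫ u in Set.Ioo (0 : ℝ) 1, (u : ℂ) ^ (s - 1) * ((theta u : ℂ) ^ 2 - 1))
        = -1 / s + 1 / (s - 1)
          + ∫ t in Set.Ioi (1 : ℝ), (t : ℂ) ^ (-s) * ((theta t : ℂ) ^ 2 - 1) ∧
    (Real.pi : ℂ) ^ (-s) * Complex.Gamma s *
        (∑' p : ℤ × ℤ, if p ≠ 0 then ((p.1 ^ 2 + p.2 ^ 2 : ℤ) : ℂ) ^ (-s) else 0)
      = -1 / s + 1 / (s - 1)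
        + ∫ t in Set.Ioi (1 : ℝ),
            ((t : ℂ) ^ (-s) + (t : ℂ) ^ (s - 1)) * ((theta t : ℂ) ^ 2 - 1) := by
  have hIoo := integral_Ioo_zero_one_cpow_mul_theta_sq_sub_one hs
  refine ⟨hIoo, ?_⟩
  have hIci : IntegrableOn (fun t : ℝ ↦ (t : ℂ) ^ (s - 1) * ((theta t : ℂ) ^ 2 - 1)) (Ici 1) :=
    Iff.mpr integrableOn_Ici_iff_integrableOn_Ioi
      (integrableOn_Ioi_one_cpow_mul_theta_sq_sub_one _)
  simp_rw [pi_cpow_mul_Gamma_mul_epstein_eq_mellin hs, mellin, smul_eq_mul, add_mul]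
  rw [← Ioo_union_Ici_eq_Ioi zero_lt_one, setIntegral_union
      ((Iio_disjoint_Ici le_rfl).mono_left Ioo_subset_Iio_self) measurableSet_Ici
      (integrableOn_Ioo_zero_one_cpow_mul_theta_sq_sub_one hs) hIci,
    integral_Ici_eq_integral_Ioi, hIoo, integral_add
      (integrableOn_Ioi_one_cpow_mul_theta_sq_sub_one _)
      (integrableOn_Ioi_one_cpow_mul_theta_sq_sub_one _), add_assoc]
end
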